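/- arXiv:2403.16602 — 3 statements merged into one kernel-verified Lean document; each statement's English description precedes it below -/
import Mathlib

section
/- Let A : D(A) ⊆ E → F be a closed linear operator between real Banach spaces with dense domain D(A), and let A* : D(A*) ⊆ F* → E* be its adjoint. Then the image A(D(A)) is closed in F if and only if there exists a constant C > 0 such that for every e* ∈ A*(D(A*)) there exists f* ∈ D(A*) with A* f* = e* and ‖f*‖_{F*} ≤ C ‖e*‖_{E*}. -/
/-!
`⇒`: the graph of `A` is a Banach space and `(e, A e) ↦ A e` maps it onto the closed range, so the
open mapping theorem gives preimages `A e = y` with `‖e‖ ≤ c ‖y‖`. Hence `f*` restricted to the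
range has norm at most `c ‖A* f*‖`, and a Hahn–Banach extension of that restriction is the
required preimage of `A* f*`.

`⇐`: let `y ∈ closure (range A)`. If `y` were not in the closure of the image of the ball of
radius `M = C ‖y‖`, a functional `f` separating them would satisfy `|f (A e)| ≤ (u / M) ‖e‖`,
i.e. `f ∈ D(A*)` with `‖A* f‖ ≤ u / M`. A preimage `f*` of `A* f` of norm `≤ C u / M` agrees
with `f` on `range A`, hence at `y`, and then `f y ≤ u`, contradicting the separation. So `y` is
approximated by images of elements of norm `≤ C ‖y‖`; the iteration from the proof of the open
mapping theorem, with the closed graph of `A` in place of continuity, puts `y` in the range.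
-/

namespace Stmt2

variable {E F : Type*} [NormedAddCommGroup E] [NormedSpace ℝ E]
  [NormedAddCommGroup F] [NormedSpace ℝ F]

/-- `g ∈ E*` is the value `A* f*` of the adjoint of `A` at `f* ∈ F*`:
`g` is the (necessarily unique, by density of `D`) continuous extension to `E` of the
functional `e ↦ f* (A e)` on `D`.  The existence of such a continuous extension is
equivalent to the defining condition `|f*(A e)| ≤ C ‖e‖` of `D(A*)`. -/
def IsAdjointPair (D : Submodule ℝ E) (A : D →ₗ[ℝ] F)
    (fstar : F →L[ℝ] ℝ) (g : E →L[ℝ] ℝ) : Prop :=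
  ∀ e : D, g e = fstar (A e)

open Filter Topology

def HasBoundedAdjointPreimages (D : Submodule ℝ E) (A : D →ₗ[ℝ] F) (C : ℝ) : Prop :=
  ∀ estar : E →L[ℝ] ℝ, (∃ fstar : F →L[ℝ] ℝ, IsAdjointPair D A fstar estar) →
    ∃ fstar : F →L[ℝ] ℝ, IsAdjointPair D A fstar estar ∧ ‖fstar‖ ≤ C * ‖estar‖

section

variable {D : Submodule ℝ E} {A : D →ₗ[ℝ] F}

theorem exists_preimage_norm_le_of_isClosed_range [CompleteSpace E] [CompleteSpace F]
    (hclosed : IsClosed {p : E × F | ∃ e : D, (e : E) = p.1 ∧ A e = p.2})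
    (hR : IsClosed (Set.range A)) :
    ∃ c > 0, ∀ y ∈ LinearMap.range A, ∃ e : D, A e = y ∧ ‖e‖ ≤ c * ‖y‖ := by
  let G := (⟨D, A⟩ : E →ₗ.[ℝ] F).graph
  have hG : (G : Set (E × F)) = {p | ∃ e : D, (e : E) = p.1 ∧ A e = p.2} :=
    Set.ext fun _ => LinearPMap.mem_graph_iff _
  have : CompleteSpace G := (hG ▸ hclosed).completeSpace_coe
  have : CompleteSpace (LinearMap.range A) :=
    (show IsClosed (LinearMap.range A : Set F) from hR).completeSpace_coe
  let T : G →L[ℝ] LinearMap.range A :=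
    ((ContinuousLinearMap.snd ℝ E F).comp G.subtypeL).codRestrict _ fun p => by
      obtain ⟨e, -, he⟩ := (LinearPMap.mem_graph_iff _).1 p.2
      exact ⟨e, he⟩
  have hT : Function.Surjective T := fun ⟨_, e, rfl⟩ =>
    ⟨⟨((e : E), A e), (LinearPMap.mem_graph_iff _).2 ⟨e, rfl, rfl⟩⟩, rfl⟩
  obtain ⟨c, hc, hpre⟩ := T.exists_preimage_norm_le hT
  refine ⟨c, hc, fun y hy => ?_⟩
  obtain ⟨p, hp, hpn⟩ := hpre ⟨y, hy⟩
  obtain ⟨e, he₁, he₂⟩ := (LinearPMap.mem_graph_iff _).1 p.2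
  refine ⟨e, he₂.trans (congrArg Subtype.val hp), ?_⟩
  calc ‖e‖ = ‖(p : E × F).1‖ := by rw [← he₁]; rfl
    _ ≤ ‖p‖ := norm_fst_le (p : E × F)
    _ ≤ c * ‖y‖ := hpn

theorem hasBoundedAdjointPreimages_of_forall_preimage_norm_le {c : ℝ} (hc : 0 ≤ c)
    (hpre : ∀ y ∈ LinearMap.range A, ∃ e : D, A e = y ∧ ‖e‖ ≤ c * ‖y‖) :
    HasBoundedAdjointPreimages D A c := by
  rintro estar ⟨fstar, hadj⟩
  let R := LinearMap.range A
  let φ : R →L[ℝ] ℝ := fstar.comp R.subtypeL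
  have hφ : ‖φ‖ ≤ c * ‖estar‖ := by
    refine φ.opNorm_le_bound (by positivity) fun ⟨y, hy⟩ => ?_
    obtain ⟨e, rfl, he⟩ := hpre y hy
    calc ‖φ ⟨A e, hy⟩‖ = ‖estar e‖ := by rw [hadj e]; rfl
      _ ≤ ‖estar‖ * ‖e‖ := estar.le_opNorm _
      _ ≤ ‖estar‖ * (c * ‖A e‖) := by gcongr
      _ = c * ‖estar‖ * ‖A e‖ := by ring
  obtain ⟨gstar, hext, hnorm⟩ := exists_extension_norm_eq R φ
  exact ⟨gstar, fun e => (hadj e).trans (hext ⟨A e, e, rfl⟩).symm, hnorm ▸ hφ⟩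

theorem exists_isAdjointPair_norm_le_of_bound (fstar : F →L[ℝ] ℝ) {K : ℝ} (hK : 0 ≤ K)
    (h : ∀ e : D, ‖fstar (A e)‖ ≤ K * ‖e‖) :
    ∃ estar : E →L[ℝ] ℝ, IsAdjointPair D A fstar estar ∧ ‖estar‖ ≤ K := by
  let ℓ : D →L[ℝ] ℝ := (fstar.toLinearMap ∘ₗ A).mkContinuous K h
  obtain ⟨estar, hext, hnorm⟩ := exists_extension_norm_eq D ℓ
  exact ⟨estar, hext, hnorm ▸ LinearMap.mkContinuous_norm_le _ hK h⟩

theorem mem_closure_image_closedBall_of_hasBoundedAdjointPreimages {C : ℝ} (hC : 0 < C)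
    (hsolv : HasBoundedAdjointPreimages D A C) {y : F} (hy : y ∈ closure (Set.range A)) :
    y ∈ closure (A '' Metric.closedBall 0 (C * ‖y‖)) := by
  rcases eq_or_ne y 0 with rfl | hy0
  · exact subset_closure ⟨0, Metric.mem_closedBall_self (by simp), map_zero A⟩
  have hy_pos : 0 < ‖y‖ := norm_pos_iff.2 hy0
  set M := C * ‖y‖ with hM_def
  have hM : 0 < M := mul_pos hC hy_pos
  by_contra hyK
  have hconv : Convex ℝ (closure (A '' Metric.closedBall 0 M)) :=
    ((convex_closedBall 0 M).linear_image A).closure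
  obtain ⟨f, u, hfK, hfy⟩ := geometric_hahn_banach_closed_point hconv isClosed_closure hyK
  have hball : ∀ e ∈ Metric.closedBall (0 : D) M, ‖f (A e)‖ ≤ u := fun e he => by
    have h₁ := hfK _ (subset_closure ⟨e, he, rfl⟩)
    have h₂ := hfK _ (subset_closure ⟨-e, by simpa using he, rfl⟩)
    rw [map_neg, map_neg] at h₂
    exact abs_le.2 ⟨by linarith, h₁.le⟩
  have hu : 0 ≤ u := (norm_nonneg _).trans (hball 0 (Metric.mem_closedBall_self hM.le))
  obtain ⟨estar, hadj, hestar⟩ := exists_isAdjointPair_norm_le_of_bound f (div_nonneg hu hM.le)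
    (LinearMap.bound_of_ball_bound' hM u (f.toLinearMap ∘ₗ A) hball)
  obtain ⟨fstar, hadj', hfstar⟩ := hsolv estar ⟨f, hadj⟩
  have heq : Set.EqOn f fstar (closure (Set.range A)) :=
    Set.EqOn.closure (by rintro _ ⟨e, rfl⟩; exact (hadj e).symm.trans (hadj' e))
      f.continuous fstar.continuous
  have : fstar y ≤ u :=
    calc fstar y ≤ ‖fstar‖ * ‖y‖ := (Real.le_norm_self _).trans (fstar.le_opNorm y)
      _ ≤ C * (u / M) * ‖y‖ := by gcongr; exact hfstar.trans (by gcongr)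
      _ = u := by rw [hM_def]; field_simp
  linarith [heq hy]

theorem exists_seq_norm_le_geometric_of_approx {C : ℝ} (hC : 0 ≤ C)
    (happrox : ∀ y ∈ closure (Set.range A), ∃ e : D, ‖e‖ ≤ C * ‖y‖ ∧ ‖y - A e‖ ≤ ‖y‖ / 2)
    {y : F} (hy : y ∈ closure (Set.range A)) :
    ∃ u : ℕ → D, (∀ n, ‖u n‖ ≤ C * ‖y‖ * (1 / 2) ^ n) ∧
      ∀ n, ‖y - A (∑ i ∈ Finset.range n, u i)‖ ≤ (1 / 2) ^ n * ‖y‖ := by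
  choose! g hg_norm hg_approx using happrox
  let r : F → F := fun z => z - A (g z)
  have hr_mem : ∀ n, r^[n] y ∈ closure (Set.range A) := by
    intro n
    induction n with
    | zero => exact hy
    | succ n ih =>
      rw [Function.iterate_succ_apply']
      exact (LinearMap.range A).topologicalClosure.sub_mem ih
        ((LinearMap.range A).le_topologicalClosure (LinearMap.mem_range_self A _))
  have hr_norm : ∀ n, ‖r^[n] y‖ ≤ (1 / 2) ^ n * ‖y‖ := by
    intro n
    induction n with
    | zero => simp
    | succ n ih =>
      rw [Function.iterate_succ_apply', pow_succ', mul_assoc]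
      exact (hg_approx _ (hr_mem n)).trans (by linarith)
  let u n := g (r^[n] y)
  have hAu : ∀ n, A (∑ i ∈ Finset.range n, u i) = y - r^[n] y := by
    intro n
    induction n with
    | zero => simp
    | succ n ih =>
      rw [Finset.sum_range_succ, map_add, ih, Function.iterate_succ_apply']
      simp only [r, u]
      abel
  refine ⟨u, fun n => ?_, fun n => by rw [hAu, sub_sub_cancel]; exact hr_norm n⟩
  calc ‖u n‖ ≤ C * ‖r^[n] y‖ := hg_norm _ (hr_mem n)
    _ ≤ C * ((1 / 2) ^ n * ‖y‖) := by gcongr; exact hr_norm n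
    _ = C * ‖y‖ * (1 / 2) ^ n := by ring

theorem mem_range_of_cauchySeq [CompleteSpace E]
    (hclosed : IsClosed {p : E × F | ∃ e : D, (e : E) = p.1 ∧ A e = p.2})
    {s : ℕ → D} (hs : CauchySeq (fun n => (s n : E))) {y : F}
    (hA : Tendsto (fun n => A (s n)) atTop (𝓝 y)) : y ∈ Set.range A := by
  obtain ⟨x, hx⟩ := cauchySeq_tendsto_of_complete hs
  obtain ⟨e, -, he⟩ := hclosed.mem_of_tendsto (hx.prodMk_nhds hA)
    (Eventually.of_forall fun n => ⟨s n, rfl, rfl⟩)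
  exact ⟨e, he⟩

theorem isClosed_range_of_mem_closure_image_closedBall [CompleteSpace E]
    (hclosed : IsClosed {p : E × F | ∃ e : D, (e : E) = p.1 ∧ A e = p.2}) {C : ℝ} (hC : 0 ≤ C)
    (h : ∀ y ∈ closure (Set.range A), y ∈ closure (A '' Metric.closedBall 0 (C * ‖y‖))) :
    IsClosed (Set.range A) := by
  have happrox : ∀ y ∈ closure (Set.range A), ∃ e : D, ‖e‖ ≤ C * ‖y‖ ∧ ‖y - A e‖ ≤ ‖y‖ / 2 := by
    intro y hy
    rcases eq_or_ne y 0 with rfl | hy0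
    · exact ⟨0, by simp, by simp⟩
    obtain ⟨_, ⟨e, he, rfl⟩, hdist⟩ :=
      Metric.mem_closure_iff.1 (h y hy) (‖y‖ / 2) (by positivity)
    exact ⟨e, mem_closedBall_zero_iff.1 he, (dist_eq_norm y (A e) ▸ hdist).le⟩
  refine isClosed_of_closure_subset fun y hy => ?_
  obtain ⟨u, hu, hres⟩ := exists_seq_norm_le_geometric_of_approx hC happrox hy
  refine mem_range_of_cauchySeq hclosed (s := fun n => ∑ i ∈ Finset.range n, u i) ?_ ?_
  · simp only [Submodule.coe_sum]
    exact cauchySeq_range_of_norm_bounded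
      (summable_geometric_two.mul_left (C * ‖y‖)).hasSum.tendsto_sum_nat.cauchySeq hu
  · refine tendsto_iff_norm_sub_tendsto_zero.2 (squeeze_zero (fun _ => norm_nonneg _)
      (fun n => (norm_sub_rev _ _).trans_le (hres n)) ?_)
    simpa using (tendsto_pow_atTop_nhds_zero_of_lt_one (by norm_num : (0 : ℝ) ≤ 1 / 2)
      (by norm_num)).mul_const ‖y‖

end

theorem closed_range_iff_bounded_solvability_adjoint_general
    [CompleteSpace E] [CompleteSpace F]
    (D : Submodule ℝ E)
    (A : D →ₗ[ℝ] F)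
    (hclosed : IsClosed {p : E × F | ∃ e : D, (e : E) = p.1 ∧ A e = p.2}) :
    IsClosed (Set.range A) ↔
      ∃ C : ℝ, 0 < C ∧ ∀ estar : E →L[ℝ] ℝ,
        (∃ fstar : F →L[ℝ] ℝ, IsAdjointPair D A fstar estar) →
        ∃ fstar : F →L[ℝ] ℝ, IsAdjointPair D A fstar estar ∧ ‖fstar‖ ≤ C * ‖estar‖ := by
  refine ⟨fun hR => ?_, fun ⟨C, hC, hsolv⟩ => ?_⟩
  · obtain ⟨c, hc, hpre⟩ := exists_preimage_norm_le_of_isClosed_range hclosed hR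
    exact ⟨c, hc, hasBoundedAdjointPreimages_of_forall_preimage_norm_le hc.le hpre⟩
  · exact isClosed_range_of_mem_closure_image_closedBall hclosed hC.le fun _ hy =>
      mem_closure_image_closedBall_of_hasBoundedAdjointPreimages hC hsolv hy

/-- Let `A : D(A) ⊆ E → F` be a closed densely defined operator between
real Banach spaces, with adjoint `A* : D(A*) ⊆ F* → E*`.  Then `A(D(A))` is closed in `F`
iff there is `C > 0` such that every `e* ∈ A*(D(A*))` has a preimage `f* ∈ D(A*)` with
`A* f* = e*` and `‖f*‖ ≤ C ‖e*‖`. -/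
theorem closed_range_iff_bounded_solvability_adjoint
    [CompleteSpace E] [CompleteSpace F]
    (D : Submodule ℝ E) (hD : Dense (D : Set E))
    (A : D →ₗ[ℝ] F)
    (hclosed : IsClosed {p : E × F | ∃ e : D, (e : E) = p.1 ∧ A e = p.2}) :
    IsClosed (Set.range A) ↔
      ∃ C : ℝ, 0 < C ∧ ∀ estar : E →L[ℝ] ℝ,
        (∃ fstar : F →L[ℝ] ℝ, IsAdjointPair D A fstar estar) →
        ∃ fstar : F →L[ℝ] ℝ, IsAdjointPair D A fstar estar ∧ ‖fstar‖ ≤ C * ‖estar‖ :=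
  closed_range_iff_bounded_solvability_adjoint_general D A hclosed

end Stmt2
end

section
/- Let A : D(A) ⊆ E → F be a closed linear operator between real Banach spaces with dense domain D(A), and let A* : D(A*) ⊆ F* → E* be its adjoint. Then the image A*(D(A*)) is closed in E* if and only if there exists a constant C > 0 such that for every f ∈ A(D(A)) there exists e ∈ D(A) with A e = f and ‖e‖_E ≤ C ‖f‖_F. -/
/-!
Let `T : Γ → F`, `(e, A e) ↦ A e`, be the bounded map on the graph `Γ` of `A`, a Banach space;
bounded solvability of `A` says that `T x` always has a preimage of norm `≤ C ‖T x‖`.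

If the range of `A*` is closed, the open mapping theorem for the projection of the (closed) graph
of `A*` onto that range gives preimages under `A*` of controlled norm. Splitting a Hahn–Banach
extension of `φ ∘ T` to `E × F` into its two components then yields
`φ (T x) ≤ M ‖φ ∘ T‖ ‖T x‖` for every `φ ∈ F*`. By Hahn–Banach separation, `T x` is therefore in
the closure of the image of the ball of radius `M ‖T x‖`, and the iteration from the proof of the
open mapping theorem turns these approximate preimages into exact ones.

Conversely, under bounded solvability a functional `g` vanishing on `ker A` satisfies
`|g e| ≤ ‖g‖ C ‖A e‖` on `D`, hence factors continuously through `A`; so the range of `A*` is the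
annihilator of `ker A`, an intersection of closed sets.
-/

open Filter Topology Metric

section ClosedRange

variable {X Y : Type*} [NormedAddCommGroup X] [NormedSpace ℝ X]
  [NormedAddCommGroup Y] [NormedSpace ℝ Y]

namespace ContinuousLinearMap

theorem exists_preimage_norm_le_of_approx [CompleteSpace X] (T : X →L[ℝ] Y) {C : ℝ} (hC : 0 ≤ C)
    (h : ∀ x, ∃ x', ‖T x' - T x‖ ≤ 1 / 2 * ‖T x‖ ∧ ‖x'‖ ≤ C * ‖T x‖) (x : X) :
    ∃ x', T x' = T x ∧ ‖x'‖ ≤ 2 * C * ‖T x‖ := by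
  choose g hg using h
  -- `p n` is a preimage of what is still unsolved after `n` corrections `u 0, …, u (n - 1)`
  let p : ℕ → X := fun n => (fun z => z - g z)^[n] x
  let u : ℕ → X := fun n => g (p n)
  have hp_succ (n : ℕ) : p (n + 1) = p n - u n := Function.iterate_succ_apply' _ n x
  have hp (n : ℕ) : ‖T (p n)‖ ≤ (1 / 2) ^ n * ‖T x‖ := by
    induction n with
    | zero => simp [p]
    | succ n ih =>
      calc ‖T (p (n + 1))‖ = ‖T (u n) - T (p n)‖ := by rw [hp_succ, map_sub, norm_sub_rev]
        _ ≤ 1 / 2 * ‖T (p n)‖ := (hg _).1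
        _ ≤ (1 / 2) ^ (n + 1) * ‖T x‖ := by rw [pow_succ', mul_assoc]; gcongr
  have hu (n : ℕ) : ‖u n‖ ≤ (1 / 2) ^ n * (C * ‖T x‖) :=
    calc ‖u n‖ ≤ C * ‖T (p n)‖ := (hg _).2
      _ ≤ C * ((1 / 2) ^ n * ‖T x‖) := mul_le_mul_of_nonneg_left (hp n) hC
      _ = (1 / 2) ^ n * (C * ‖T x‖) := by ring
  have hgeom : Summable fun n : ℕ => (1 / 2 : ℝ) ^ n * (C * ‖T x‖) :=
    summable_geometric_two.mul_right _
  have hsum : Summable fun n => ‖u n‖ := .of_nonneg_of_le (fun _ => norm_nonneg _) hu hgeom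
  have hpartial (n : ℕ) : ∑ i ∈ Finset.range n, u i = x - p n := by
    induction n with
    | zero => simp [p]
    | succ n ih => rw [Finset.sum_range_succ, ih, hp_succ]; abel
  have hlim : Tendsto (fun n => T (p n)) atTop (𝓝 0) := by
    refine squeeze_zero_norm hp ?_
    simpa using (tendsto_pow_atTop_nhds_zero_of_lt_one (by norm_num : (0 : ℝ) ≤ 1 / 2)
      (by norm_num)).mul_const ‖T x‖
  refine ⟨∑' n, u n, ?_, ?_⟩
  · have h₁ : Tendsto (fun n => T (x - p n)) atTop (𝓝 (T (∑' n, u n))) := by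
      simp_rw [← hpartial]
      exact (T.continuous.tendsto _).comp hsum.of_norm.hasSum.tendsto_sum_nat
    have h₂ : Tendsto (fun n => T (x - p n)) atTop (𝓝 (T x)) := by
      simpa using tendsto_const_nhds.sub hlim
    exact tendsto_nhds_unique h₁ h₂
  · calc ‖∑' n, u n‖ ≤ ∑' n, ‖u n‖ := norm_tsum_le_tsum_norm hsum
      _ ≤ ∑' n : ℕ, (1 / 2 : ℝ) ^ n * (C * ‖T x‖) := hsum.tsum_le_tsum hu hgeom
      _ = 2 * C * ‖T x‖ := by rw [tsum_mul_right, tsum_geometric_two, mul_assoc]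

theorem mem_closure_image_closedBall_of_dual_le (T : X →L[ℝ] Y) {r : ℝ} (hr : 0 < r) {y : Y}
    (h : ∀ φ : StrongDual ℝ Y, φ y ≤ r * ‖φ ∘L T‖) : y ∈ closure (T '' closedBall 0 r) := by
  by_contra hy
  have hconv : Convex ℝ (closure (T '' closedBall (0 : X) r)) :=
    ((convex_closedBall 0 r).linear_image (T : X →ₗ[ℝ] Y)).closure
  obtain ⟨ψ, u, hlt, hgt⟩ := geometric_hahn_banach_closed_point hconv isClosed_closure hy
  have hmem {z : X} (hz : z ∈ closedBall 0 r) : T z ∈ closure (T '' closedBall 0 r) :=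
    subset_closure ⟨z, hz, rfl⟩
  have hbound : ∀ z ∈ closedBall (0 : X) r, ‖(ψ ∘L T) z‖ ≤ u := by
    intro z hz
    have hneg := hlt _ (hmem (by simpa using hz : -z ∈ closedBall 0 r))
    rw [map_neg, map_neg] at hneg
    rw [Real.norm_eq_abs, comp_apply]
    exact abs_le.mpr ⟨by linarith, (hlt _ (hmem hz)).le⟩
  have hnorm : ‖ψ ∘L T‖ ≤ u / r := opNorm_bound_of_ball_bound hr u _ hbound
  have : r * ‖ψ ∘L T‖ ≤ u := by rwa [le_div_iff₀ hr, mul_comm] at hnorm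
  linarith [h ψ]

theorem exists_preimage_norm_le_of_dual_le [CompleteSpace X] (T : X →L[ℝ] Y) {M : ℝ} (hM : 0 < M)
    (h : ∀ (φ : StrongDual ℝ Y) (x : X), φ (T x) ≤ M * ‖φ ∘L T‖ * ‖T x‖) (x : X) :
    ∃ x', T x' = T x ∧ ‖x'‖ ≤ 2 * M * ‖T x‖ := by
  refine T.exists_preimage_norm_le_of_approx hM.le (fun x => ?_) x
  rcases eq_or_ne (T x) 0 with hx | hx
  · exact ⟨0, by simp [hx], by simp [hx]⟩
  have hTx : 0 < ‖T x‖ := norm_pos_iff.mpr hx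
  have hcl := T.mem_closure_image_closedBall_of_dual_le (mul_pos hM hTx) (y := T x)
    (fun φ => (h φ x).trans_eq (by ring))
  obtain ⟨_, ⟨x', hx', rfl⟩, hdist⟩ := Metric.mem_closure_iff.mp hcl _ (half_pos hTx)
  refine ⟨x', ?_, by simpa using hx'⟩
  rw [← dist_eq_norm, dist_comm]
  linarith

end ContinuousLinearMap

theorem Submodule.exists_norm_snd_le_of_isClosed_map_fst [CompleteSpace X] [CompleteSpace Y]
    (W : Submodule ℝ (X × Y)) (hW : IsClosed (W : Set (X × Y)))
    (hfst : IsClosed (W.map (LinearMap.fst ℝ X Y) : Set X)) :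
    ∃ C > 0, ∀ p ∈ W, ∃ q ∈ W, q.1 = p.1 ∧ ‖q.2‖ ≤ C * ‖p.1‖ := by
  have : CompleteSpace W := hW.completeSpace_coe
  have : CompleteSpace (W.map (LinearMap.fst ℝ X Y)) := hfst.completeSpace_coe
  let π : W →L[ℝ] W.map (LinearMap.fst ℝ X Y) :=
    ((ContinuousLinearMap.fst ℝ X Y) ∘L W.subtypeL).codRestrict _
      fun q => Submodule.mem_map_of_mem q.2
  have hπ : Function.Surjective π := by
    rintro ⟨_, q, hq, rfl⟩
    exact ⟨⟨q, hq⟩, rfl⟩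
  obtain ⟨C, hC, hpre⟩ := π.exists_preimage_norm_le hπ
  refine ⟨C, hC, fun p hp => ?_⟩
  obtain ⟨q, hq, hqnorm⟩ := hpre ⟨p.1, Submodule.mem_map_of_mem hp⟩
  exact ⟨q, q.2, congrArg Subtype.val hq, (norm_snd_le (q : X × Y)).trans hqnorm⟩

theorem LinearMap.exists_strongDual_comp_eq_of_abs_le {V : Type*} [AddCommGroup V] [Module ℝ V]
    (A : V →ₗ[ℝ] Y) (g : V →ₗ[ℝ] ℝ) {K : ℝ}
    (h : ∀ v, |g v| ≤ K * ‖A v‖) : ∃ φ : StrongDual ℝ Y, ∀ v, φ (A v) = g v := by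
  have hker : A.ker ≤ g.ker := fun v hv => by
    have := h v
    rw [LinearMap.mem_ker.mp hv, norm_zero, mul_zero] at this
    exact LinearMap.mem_ker.mpr (abs_nonpos_iff.mp this)
  let φ₀ : A.range →ₗ[ℝ] ℝ := A.ker.liftQ g hker ∘ₗ A.quotKerEquivRange.symm.toLinearMap
  have hφ₀ (v : V) : φ₀ ⟨A v, A.mem_range_self v⟩ = g v := by
    simp [φ₀, LinearMap.quotKerEquivRange_symm_apply_image]
  let φ₁ : StrongDual ℝ A.range := φ₀.mkContinuous K <| by
    rintro ⟨_, v, rfl⟩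
    simpa [hφ₀] using h v
  obtain ⟨φ, hφ, -⟩ := exists_extension_norm_eq A.range φ₁
  exact ⟨φ, fun v => (hφ ⟨A v, A.mem_range_self v⟩).trans (hφ₀ v)⟩

end ClosedRange

namespace Stmt3

variable {E F : Type*} [NormedAddCommGroup E] [NormedSpace ℝ E]
  [NormedAddCommGroup F] [NormedSpace ℝ F]

/-- `g ∈ E*` is the value `A* f*` of the adjoint of `A` at `f* ∈ F*`:
`g` is the (necessarily unique, by density of `D`) continuous extension to `E` of the
functional `e ↦ f* (A e)` on `D`.  The existence of such a continuous extension is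
equivalent to the defining condition `|f*(A e)| ≤ C ‖e‖` of `D(A*)`. -/
def IsAdjointPair (D : Submodule ℝ E) (A : D →ₗ[ℝ] F)
    (fstar : F →L[ℝ] ℝ) (g : E →L[ℝ] ℝ) : Prop :=
  ∀ e : D, g e = fstar (A e)

section Adjoint

variable (D : Submodule ℝ E) (A : D →ₗ[ℝ] F)

def adjointRange : Set (StrongDual ℝ E) :=
  {g | ∃ fstar, IsAdjointPair D A fstar g}

/-- The graph of `A*` with its coordinates swapped, so that its first projection is the range
of `A*`. -/
def adjointGraph : Submodule ℝ (StrongDual ℝ E × StrongDual ℝ F) where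
  carrier := {p | IsAdjointPair D A p.2 p.1}
  add_mem' hp hq e := by simp [hp e, hq e]
  zero_mem' e := by simp
  smul_mem' c p hp e := by simp [hp e]

theorem isClosed_adjointGraph :
    IsClosed (adjointGraph D A : Set (StrongDual ℝ E × StrongDual ℝ F)) := by
  have : (adjointGraph D A : Set (StrongDual ℝ E × StrongDual ℝ F)) =
      ⋂ e : D, {p | p.1 e = p.2 (A e)} := by
    ext p
    simp [adjointGraph, IsAdjointPair]
  rw [this]
  exact isClosed_iInter fun e => isClosed_eq
    ((ContinuousLinearMap.apply ℝ ℝ (e : E)).continuous.comp continuous_fst)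
    ((ContinuousLinearMap.apply ℝ ℝ (A e)).continuous.comp continuous_snd)

theorem coe_map_fst_adjointGraph :
    ((adjointGraph D A).map (LinearMap.fst ℝ _ _) : Set (StrongDual ℝ E)) = adjointRange D A := by
  ext g
  simp only [SetLike.mem_coe, Submodule.mem_map, LinearMap.fst_apply, Prod.exists,
    exists_and_right, exists_eq_right]
  rfl

theorem exists_adjointPair_norm_le (hS : IsClosed (adjointRange D A)) :
    ∃ C > 0, ∀ fstar g, IsAdjointPair D A fstar g → ∃ h, IsAdjointPair D A h g ∧ ‖h‖ ≤ C * ‖g‖ := by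
  obtain ⟨C, hC, hpre⟩ := (adjointGraph D A).exists_norm_snd_le_of_isClosed_map_fst
    (isClosed_adjointGraph D A) (by rwa [coe_map_fst_adjointGraph])
  refine ⟨C, hC, fun fstar g hpair => ?_⟩
  obtain ⟨q, hq, hq₁ : q.1 = g, hq₂⟩ := hpre (g, fstar) hpair
  exact ⟨q.2, fun e => by rw [← hq₁]; exact hq e, hq₂⟩

def graphSnd : (LinearPMap.mk D A).graph →L[ℝ] F :=
  ContinuousLinearMap.snd ℝ E F ∘L (LinearPMap.mk D A).graph.subtypeL

theorem exists_graphSnd_eq (x : (LinearPMap.mk D A).graph) :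
    ∃ e : D, (x : E × F) = ((e : E), A e) ∧ graphSnd D A x = A e := by
  obtain ⟨e, h₁, h₂⟩ := (LinearPMap.mem_graph_iff _).mp x.2
  exact ⟨e, Prod.ext h₁.symm h₂.symm, h₂.symm⟩

theorem exists_norm_le_eq_on_range_of_comp_graphSnd {C : ℝ} (hC : 0 ≤ C)
    (hpre : ∀ fstar g, IsAdjointPair D A fstar g → ∃ h, IsAdjointPair D A h g ∧ ‖h‖ ≤ C * ‖g‖)
    (φ : StrongDual ℝ F) :
    ∃ ψ : StrongDual ℝ F, ‖ψ‖ ≤ (1 + C) * ‖φ ∘L graphSnd D A‖ ∧ ∀ e : D, φ (A e) = ψ (A e) := by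
  obtain ⟨Φ, hΦ, hΦnorm⟩ := exists_extension_norm_eq _ (φ ∘L graphSnd D A)
  set t := ‖φ ∘L graphSnd D A‖
  -- on `D`, `φ ∘ A = g₀ + h₀ ∘ A`; so `g₀ = A* (φ - h₀)` has an `A*`-preimage `h₁` of norm `≤ C t`
  set g₀ := Φ ∘L ContinuousLinearMap.inl ℝ E F
  set h₀ := Φ ∘L ContinuousLinearMap.inr ℝ E F
  have hg₀ : ‖g₀‖ ≤ t := (Φ.opNorm_comp_le _).trans
    (by simpa [hΦnorm] using
      mul_le_mul_of_nonneg_left (ContinuousLinearMap.norm_inl_le_one ℝ E F) (norm_nonneg Φ))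
  have hh₀ : ‖h₀‖ ≤ t := (Φ.opNorm_comp_le _).trans
    (by simpa [hΦnorm] using
      mul_le_mul_of_nonneg_left (ContinuousLinearMap.norm_inr_le_one ℝ E F) (norm_nonneg Φ))
  have hsplit (e : D) : g₀ e + h₀ (A e) = φ (A e) := by
    rw [Φ.comp_inl_add_comp_inr (e, A e)]
    exact hΦ ⟨(e, A e), (LinearPMap.mem_graph_iff _).mpr ⟨e, rfl, rfl⟩⟩
  obtain ⟨h₁, hh₁, hh₁norm⟩ := hpre (φ - h₀) g₀ fun e => by
    simp [← hsplit e]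
  refine ⟨h₀ + h₁, ?_, fun e => ?_⟩
  · calc ‖h₀ + h₁‖ ≤ ‖h₀‖ + ‖h₁‖ := norm_add_le _ _
      _ ≤ t + C * t := add_le_add hh₀ (hh₁norm.trans (by gcongr))
      _ = (1 + C) * t := by ring
  · simp [← hsplit e, hh₁ e, add_comm]

theorem apply_graphSnd_le {C : ℝ} (hC : 0 ≤ C)
    (hpre : ∀ fstar g, IsAdjointPair D A fstar g → ∃ h, IsAdjointPair D A h g ∧ ‖h‖ ≤ C * ‖g‖)
    (φ : StrongDual ℝ F) (x : (LinearPMap.mk D A).graph) :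
    φ (graphSnd D A x) ≤ (1 + C) * ‖φ ∘L graphSnd D A‖ * ‖graphSnd D A x‖ := by
  obtain ⟨ψ, hψ, hφψ⟩ := exists_norm_le_eq_on_range_of_comp_graphSnd D A hC hpre φ
  obtain ⟨e, -, hx⟩ := exists_graphSnd_eq D A x
  rw [hx, hφψ e]
  exact (le_abs_self _).trans ((ψ.le_opNorm _).trans (by gcongr))

theorem exists_norm_le_of_isClosed_adjointRange [CompleteSpace E] [CompleteSpace F]
    (hA : (LinearPMap.mk D A).IsClosed) (hS : IsClosed (adjointRange D A)) :
    ∃ C : ℝ, 0 < C ∧ ∀ f ∈ Set.range A, ∃ e : D, A e = f ∧ ‖(e : E)‖ ≤ C * ‖f‖ := by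
  obtain ⟨C, hC, hpre⟩ := exists_adjointPair_norm_le D A hS
  have : CompleteSpace (LinearPMap.mk D A).graph := hA.completeSpace_coe
  refine ⟨2 * (1 + C), by positivity, ?_⟩
  rintro _ ⟨e, rfl⟩
  obtain ⟨x, hx, hxnorm⟩ := (graphSnd D A).exists_preimage_norm_le_of_dual_le (by positivity)
    (apply_graphSnd_le D A hC.le hpre)
    ⟨((e : E), A e), (LinearPMap.mem_graph_iff _).mpr ⟨e, rfl, rfl⟩⟩
  obtain ⟨e', hx', hAe'⟩ := exists_graphSnd_eq D A x
  refine ⟨e', hAe' ▸ hx, ?_⟩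
  calc ‖(e' : E)‖ ≤ ‖((e' : E), A e')‖ := norm_fst_le ((e' : E), A e')
    _ = ‖(x : E × F)‖ := by rw [hx']
    _ ≤ 2 * (1 + C) * ‖A e‖ := hxnorm

theorem adjointRange_eq_of_norm_le {C : ℝ}
    (hsolv : ∀ f ∈ Set.range A, ∃ e : D, A e = f ∧ ‖(e : E)‖ ≤ C * ‖f‖) :
    adjointRange D A = {g | ∀ e : D, A e = 0 → g e = 0} := by
  ext g
  refine ⟨fun ⟨fstar, hg⟩ e he => by rw [hg e, he, map_zero], fun hg => ?_⟩
  -- `g e = g e'` for a small solution `e'` of `A e' = A e`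
  refine (A.exists_strongDual_comp_eq_of_abs_le (g.toLinearMap ∘ₗ D.subtype) (K := ‖g‖ * C)
    fun e => ?_).imp fun fstar h e => (h e).symm
  obtain ⟨e', he', hnorm⟩ := hsolv (A e) ⟨e, rfl⟩
  have hge : g e = g e' := by
    rw [← sub_eq_zero, ← map_sub, ← Submodule.coe_sub]
    exact hg _ (by rw [map_sub, he', sub_self])
  calc |g e| = ‖g e'‖ := by rw [hge, Real.norm_eq_abs]
    _ ≤ ‖g‖ * ‖(e' : E)‖ := g.le_opNorm _
    _ ≤ ‖g‖ * (C * ‖A e‖) := by gcongr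
    _ = ‖g‖ * C * ‖A e‖ := by ring

theorem isClosed_adjointRange_of_norm_le {C : ℝ}
    (hsolv : ∀ f ∈ Set.range A, ∃ e : D, A e = f ∧ ‖(e : E)‖ ≤ C * ‖f‖) :
    IsClosed (adjointRange D A) := by
  rw [adjointRange_eq_of_norm_le D A hsolv, Set.ofPred_forall]
  exact isClosed_iInter fun e => by
    rw [Set.ofPred_forall]
    exact isClosed_iInter fun _ => isClosed_eq (ContinuousLinearMap.apply ℝ ℝ (e : E)).continuous
      continuous_const

end Adjoint

theorem adjoint_closed_range_iff_bounded_solvability_general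
    [CompleteSpace E] [CompleteSpace F]
    (D : Submodule ℝ E)
    (A : D →ₗ[ℝ] F)
    (hclosed : IsClosed {p : E × F | ∃ e : D, (e : E) = p.1 ∧ A e = p.2}) :
    IsClosed {g : E →L[ℝ] ℝ | ∃ fstar : F →L[ℝ] ℝ, IsAdjointPair D A fstar g} ↔
      ∃ C : ℝ, 0 < C ∧ ∀ f ∈ Set.range A, ∃ e : D, A e = f ∧ ‖(e : E)‖ ≤ C * ‖f‖ := by
  have hgraph : ((LinearPMap.mk D A).graph : Set (E × F)) =
      {p | ∃ e : D, (e : E) = p.1 ∧ A e = p.2} :=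
    Set.ext fun _ => LinearPMap.mem_graph_iff _
  have hA : (LinearPMap.mk D A).IsClosed := by rwa [LinearPMap.IsClosed, hgraph]
  exact ⟨exists_norm_le_of_isClosed_adjointRange D A hA,
    fun ⟨_, _, hsolv⟩ => isClosed_adjointRange_of_norm_le D A hsolv⟩

/-- Let `A : D(A) ⊆ E → F` be a closed densely defined operator between
real Banach spaces, with adjoint `A* : D(A*) ⊆ F* → E*`.  Then the image `A*(D(A*))` is
closed in `E*` iff there is `C > 0` such that every `f ∈ A(D(A))` has a preimage
`e ∈ D(A)` with `A e = f` and `‖e‖ ≤ C ‖f‖`. -/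
theorem adjoint_closed_range_iff_bounded_solvability
    [CompleteSpace E] [CompleteSpace F]
    (D : Submodule ℝ E) (hD : Dense (D : Set E))
    (A : D →ₗ[ℝ] F)
    (hclosed : IsClosed {p : E × F | ∃ e : D, (e : E) = p.1 ∧ A e = p.2}) :
    IsClosed {g : E →L[ℝ] ℝ | ∃ fstar : F →L[ℝ] ℝ, IsAdjointPair D A fstar g} ↔
      ∃ C : ℝ, 0 < C ∧ ∀ f ∈ Set.range A, ∃ e : D, A e = f ∧ ‖(e : E)‖ ≤ C * ‖f‖ :=
  adjoint_closed_range_iff_bounded_solvability_general D A hclosed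

end Stmt3
end

section
/- Every Korányi ball B(p,r) is a convex subset of ℝ^{2n+1}. -/
open MeasureTheory Filter Topology
open scoped ENNReal RealInnerProductSpace

namespace Heisenberg

/-- The underlying space of the Heisenberg group `ℍⁿ`: `ℝⁿ × ℝⁿ × ℝ`, points `(x, y, t)`. -/
abbrev H (n : ℕ) := (Fin n → ℝ) × (Fin n → ℝ) × ℝ

/-- The Heisenberg group operation
`p·p′ = (x + x′, y + y′, t + t′ + (1/2)·Σⱼ (xⱼ y′ⱼ − yⱼ x′ⱼ))`. -/
noncomputable def hmul {n : ℕ} (p q : H n) : H n :=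
  (p.1 + q.1, p.2.1 + q.2.1,
    p.2.2 + q.2.2 + (∑ j, (p.1 j * q.2.1 j - p.2.1 j * q.1 j)) / 2)

/-- The group inverse `p⁻¹ = -p` (the identity is `e = 0`). -/
def hinv {n : ℕ} (p : H n) : H n := (-p.1, -p.2.1, -p.2.2)

/-- The Cygan–Korányi gauge `ρ(p) = (|(x,y)|⁴ + 16 t²)^{1/4}`,
with `|·|` the Euclidean norm. -/
noncomputable def gauge {n : ℕ} (p : H n) : ℝ :=
  ((∑ j, (p.1 j) ^ 2 + ∑ j, (p.2.1 j) ^ 2) ^ 2 + 16 * p.2.2 ^ 2) ^ ((1 : ℝ) / 4)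

/-- The gauge distance `d(p,q) = ρ(p⁻¹·q)`. -/
noncomputable def hdist {n : ℕ} (p q : H n) : ℝ := gauge (hmul (hinv p) q)


/-- The fourth power of the gauge, a convex function. -/
def gsq {n : ℕ} (q : H n) : ℝ :=
  (∑ j, (q.1 j) ^ 2 + ∑ j, (q.2.1 j) ^ 2) ^ 2 + 16 * q.2.2 ^ 2

lemma gsq_nonneg {n : ℕ} (q : H n) : 0 ≤ gsq q := by unfold gsq; positivity

lemma gauge_eq {n : ℕ} (q : H n) : gauge q = (gsq q) ^ ((1:ℝ)/4) := rfl

lemma gauge_nonneg {n : ℕ} (q : H n) : 0 ≤ gauge q := by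
  rw [gauge_eq]; exact Real.rpow_nonneg (gsq_nonneg q) _

lemma gauge_pow4 {n : ℕ} (q : H n) : (gauge q) ^ (4:ℕ) = gsq q := by
  rw [gauge_eq, ← Real.rpow_natCast ((gsq q) ^ ((1:ℝ)/4)) 4,
    ← Real.rpow_mul (gsq_nonneg q)]
  norm_num

lemma gauge_lt_iff {n : ℕ} (q : H n) {r : ℝ} (hr : 0 < r) :
    gauge q < r ↔ gsq q < r ^ 4 := by
  rw [← gauge_pow4 q]
  constructor
  · intro h
    exact pow_lt_pow_left₀ h (gauge_nonneg q) (by norm_num)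
  · intro h
    by_contra hle
    push_neg at hle
    exact absurd (pow_le_pow_left₀ hr.le hle 4) (not_le.mpr h)

lemma sq_combo {a b x y : ℝ} (ha : 0 ≤ a) (hb : 0 ≤ b) (hab : a + b = 1) :
    (a * x + b * y) ^ 2 ≤ a * x ^ 2 + b * y ^ 2 := by
  nlinarith [mul_nonneg (mul_nonneg ha hb) (sq_nonneg (x - y))]

lemma gsq_combo {n : ℕ} (u v : H n) {a b : ℝ} (ha : 0 ≤ a) (hb : 0 ≤ b)
    (hab : a + b = 1) :
    gsq (a • u + b • v) ≤ a * gsq u + b * gsq v := by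
  set Su := ∑ j, (u.1 j) ^ 2 + ∑ j, (u.2.1 j) ^ 2 with hSu
  set Sv := ∑ j, (v.1 j) ^ 2 + ∑ j, (v.2.1 j) ^ 2 with hSv
  have hSu0 : 0 ≤ Su := by rw [hSu]; positivity
  have hSv0 : 0 ≤ Sv := by rw [hSv]; positivity
  have hS : (∑ j, ((a • u + b • v).1 j) ^ 2 + ∑ j, ((a • u + b • v).2.1 j) ^ 2)
      ≤ a * Su + b * Sv := by
    have h1 : ∑ j, ((a • u + b • v).1 j) ^ 2 ≤ ∑ j, (a * (u.1 j) ^ 2 + b * (v.1 j) ^ 2) := by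
      refine Finset.sum_le_sum fun j _ => ?_
      simp only [Prod.fst_add, Prod.smul_fst, Pi.add_apply, Pi.smul_apply, smul_eq_mul]
      exact sq_combo ha hb hab
    have h2 : ∑ j, ((a • u + b • v).2.1 j) ^ 2 ≤ ∑ j, (a * (u.2.1 j) ^ 2 + b * (v.2.1 j) ^ 2) := by
      refine Finset.sum_le_sum fun j _ => ?_
      simp only [Prod.snd_add, Prod.smul_snd, Prod.fst_add, Prod.smul_fst,
        Pi.add_apply, Pi.smul_apply, smul_eq_mul]
      exact sq_combo ha hb hab
    calc _ ≤ (∑ j, (a * (u.1 j) ^ 2 + b * (v.1 j) ^ 2))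
            + ∑ j, (a * (u.2.1 j) ^ 2 + b * (v.2.1 j) ^ 2) := add_le_add h1 h2
    _ = a * Su + b * Sv := by
        simp only [Finset.sum_add_distrib, ← Finset.mul_sum, hSu, hSv]; ring
  have hS0 : 0 ≤ ∑ j, ((a • u + b • v).1 j) ^ 2 + ∑ j, ((a • u + b • v).2.1 j) ^ 2 := by
    positivity
  have ht : ((a • u + b • v).2.2) = a * u.2.2 + b * v.2.2 := by
    simp [Prod.smul_snd, smul_eq_mul]
  unfold gsq
  rw [ht, ← hSu, ← hSv]
  have hsq1 : (∑ j, ((a • u + b • v).1 j) ^ 2 + ∑ j, ((a • u + b • v).2.1 j) ^ 2) ^ 2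
      ≤ (a * Su + b * Sv) ^ 2 := pow_le_pow_left₀ hS0 hS 2
  have hsq2 : (a * Su + b * Sv) ^ 2 ≤ a * Su ^ 2 + b * Sv ^ 2 := sq_combo ha hb hab
  have hsq3 : (a * u.2.2 + b * v.2.2) ^ 2 ≤ a * u.2.2 ^ 2 + b * v.2.2 ^ 2 :=
    sq_combo ha hb hab
  nlinarith [hsq1, hsq2, hsq3]

lemma hmul_affine {n : ℕ} (p u v : H n) {a b : ℝ} (hab : a + b = 1) :
    hmul (hinv p) (a • u + b • v) = a • hmul (hinv p) u + b • hmul (hinv p) v := by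
  have hb : b = 1 - a := by linarith
  subst hb
  unfold hmul hinv
  refine Prod.ext ?_ (Prod.ext ?_ ?_)
  · funext j
    simp only [Prod.fst_add, Prod.smul_fst, Pi.add_apply, Pi.smul_apply, Pi.neg_apply,
      smul_eq_mul]
    ring
  · funext j
    simp only [Prod.snd_add, Prod.smul_snd, Prod.fst_add, Prod.smul_fst,
      Pi.add_apply, Pi.smul_apply, Pi.neg_apply, smul_eq_mul]
    ring
  · simp only [Prod.snd_add, Prod.smul_snd, Prod.fst_add, Prod.smul_fst,
      Pi.add_apply, Pi.smul_apply, Pi.neg_apply, smul_eq_mul]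
    have hs : ∑ x, (-p.1 x * (a * u.2.1 x + (1 - a) * v.2.1 x)
          - -p.2.1 x * (a * u.1 x + (1 - a) * v.1 x))
        = a * (∑ x, (-p.1 x * u.2.1 x - -p.2.1 x * u.1 x))
          + (1 - a) * (∑ x, (-p.1 x * v.2.1 x - -p.2.1 x * v.1 x)) := by
      rw [Finset.mul_sum, Finset.mul_sum, ← Finset.sum_add_distrib]
      exact Finset.sum_congr rfl fun j _ => by ring
    rw [hs]
    ring

/-- Every Korányi ball `B(p,r)` is a convex subset of `ℝ^{2n+1}`. -/
theorem koranyi_ball_convex (n : ℕ) (hn : 1 ≤ n) (p : H n) (r : ℝ) :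
    Convex ℝ {q : H n | hdist p q < r} := by
  intro q₁ hq₁ q₂ hq₂ a b ha hb hab
  simp only [Set.mem_setOf_eq, hdist] at *
  have hr : 0 < r := lt_of_le_of_lt (gauge_nonneg _) hq₁
  rw [hmul_affine p q₁ q₂ hab, gauge_lt_iff _ hr]
  rw [gauge_lt_iff _ hr] at hq₁ hq₂
  have h := gsq_combo (hmul (hinv p) q₁) (hmul (hinv p) q₂) ha hb hab
  refine lt_of_le_of_lt h ?_
  rcases eq_or_lt_of_le ha with h0 | h0
  · have hb1 : b = 1 := by linarith
    simp [← h0, hb1, hq₂]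
  · have h1 : a * gsq (hmul (hinv p) q₁) < a * r ^ 4 := mul_lt_mul_of_pos_left hq₁ h0
    have h2 : b * gsq (hmul (hinv p) q₂) ≤ b * r ^ 4 := mul_le_mul_of_nonneg_left hq₂.le hb
    have hsum : a * r ^ 4 + b * r ^ 4 = r ^ 4 := by rw [← add_mul, hab, one_mul]
    linarith

end Heisenberg
end
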